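/- (Fold lemma) If u ≠ v are vertices of a finite graph G with N(v) ⊆ N(u), then c(G) ≤ c(G \ u). -/

import Mathlib

open Classical

variable {V : Type*}

/-- A finset of vertices is independent if no two of its members are adjacent. -/
def IsIndepSet (G : SimpleGraph V) (s : Finset V) : Prop :=
  ∀ u ∈ s, ∀ v ∈ s, ¬ G.Adj u v

/-- The set of faces of the independence complex of `G` (including the empty face). -/
def IndFaces (G : SimpleGraph V) : Set (Finset V) :=
  {s | IsIndepSet G s}

/-- `P` is a matching on the face poset `Δ`: a set of disjoint covering pairs. -/
def IsPosetMatching (Δ : Set (Finset V)) (P : Set (Finset V × Finset V)) : Prop :=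
  (∀ p ∈ P, p.1 ∈ Δ ∧ p.2 ∈ Δ ∧ p.1 ⊆ p.2 ∧ p.2.card = p.1.card + 1) ∧
  (∀ p ∈ P, ∀ q ∈ P, p ≠ q → p.1 ≠ q.1 ∧ p.1 ≠ q.2 ∧ p.2 ≠ q.1 ∧ p.2 ≠ q.2)

/-- A cycle in a matching: distinct matched pairs `{σ₁⊂τ₁},…,{σₙ⊂τₙ}`, `n > 1`,
with `σ_{i+1} ⊂ τ_i` for `i < n` and `σ₁ ⊂ τₙ`. -/
def MatchingHasCycle (P : Set (Finset V × Finset V)) : Prop :=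
  ∃ n : ℕ, 2 ≤ n ∧ ∃ f : ℕ → Finset V × Finset V,
    (∀ i < n, f i ∈ P) ∧ Set.InjOn f (Set.Iio n) ∧
    (∀ i, i + 1 < n → (f (i + 1)).1 ⊂ (f i).2) ∧ (f 0).1 ⊂ (f (n - 1)).2

/-- An acyclic (Morse) matching on the face poset `Δ`. -/
def IsAcyclicMatching (Δ : Set (Finset V)) (P : Set (Finset V × Finset V)) : Prop :=
  IsPosetMatching Δ P ∧ ¬ MatchingHasCycle P

/-- The critical (unmatched) faces of `Δ` with respect to `P`. -/
def criticalSet (Δ : Set (Finset V)) (P : Set (Finset V × Finset V)) : Set (Finset V) :=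
  {s ∈ Δ | ∀ p ∈ P, s ≠ p.1 ∧ s ≠ p.2}

/-- `cInvariant G` is the minimal number of critical cells in an acyclic matching on the
face poset of the independence complex of `G`. -/
noncomputable def cInvariant (G : SimpleGraph V) : ℕ :=
  sInf {n | ∃ P, IsAcyclicMatching (IndFaces G) P ∧ (criticalSet (IndFaces G) P).ncard = n}

/-!
Split the faces of `Ind(G)` according to whether they contain `u`. The faces avoiding `u` are the
faces of `Ind(G \ u)` and carry an optimal acyclic matching of `G \ u`. The faces containing `u`
are all matched by toggling `v`, which keeps them independent because `N(v) ⊆ N(u)`; this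
matching is acyclic. Since a face avoiding `u` has no subface containing `u`, a cycle of the
union never passes from one part to the other, so the union is acyclic and its critical faces
are exactly those of the matching on `G \ u`.
-/

theorem IsIndepSet.mono {G : SimpleGraph V} {s t : Finset V} (hst : s ⊆ t)
    (ht : IsIndepSet G t) : IsIndepSet G s :=
  fun a ha b hb => ht a (hst ha) b (hst hb)

theorem IsIndepSet.insert_of_neighborSet_subset {G : SimpleGraph V} {s : Finset V} {u v : V}
    (hs : IsIndepSet G s) (hu : u ∈ s) (h : G.neighborSet v ⊆ G.neighborSet u) :
    IsIndepSet G (insert v s) := by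
  have hv : ∀ w ∈ s, ¬ G.Adj v w := fun w hw hvw => hs u hu w hw (h hvw)
  intro a ha b hb hab
  rcases Finset.mem_insert.1 ha with rfl | ha' <;> rcases Finset.mem_insert.1 hb with rfl | hb'
  · exact G.loopless.irrefl _ hab
  · exact hv b hb' hab
  · exact hv a ha' hab.symm
  · exact hs a ha' b hb' hab

theorem criticalSet_subset (Δ : Set (Finset V)) (P : Set (Finset V × Finset V)) :
    criticalSet Δ P ⊆ Δ :=
  fun _ hs => hs.1

theorem criticalSet_union (Δ : Set (Finset V)) (P Q : Set (Finset V × Finset V)) :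
    criticalSet Δ (P ∪ Q) = criticalSet Δ P ∩ criticalSet Δ Q := by
  ext s
  simp only [criticalSet, Set.mem_union, or_imp, forall_and, Set.mem_inter_iff, Set.mem_ofPred_eq]
  tauto

theorem isAcyclicMatching_empty (Δ : Set (Finset V)) : IsAcyclicMatching Δ ∅ := by
  refine ⟨⟨fun _ hp => hp.elim, fun _ hp => hp.elim⟩, ?_⟩
  rintro ⟨_, hn, _, hf, -⟩
  exact hf 0 (by omega)

theorem exists_isAcyclicMatching_ncard_criticalSet_eq (G : SimpleGraph V) :
    ∃ P, IsAcyclicMatching (IndFaces G) P ∧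
      (criticalSet (IndFaces G) P).ncard = cInvariant G :=
  Nat.sInf_mem (s := {n | ∃ P, IsAcyclicMatching (IndFaces G) P ∧
    (criticalSet (IndFaces G) P).ncard = n}) ⟨_, ∅, isAcyclicMatching_empty _, rfl⟩

theorem cInvariant_le_ncard_criticalSet {G : SimpleGraph V} {P : Set (Finset V × Finset V)}
    (hP : IsAcyclicMatching (IndFaces G) P) :
    cInvariant G ≤ (criticalSet (IndFaces G) P).ncard :=
  Nat.sInf_le ⟨P, hP, rfl⟩

section Union

variable {Δ : Set (Finset V)} {P Q : Set (Finset V × Finset V)} {u : V}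

theorem IsPosetMatching.union (hP : IsPosetMatching Δ P) (hQ : IsPosetMatching Δ Q)
    (hPu : ∀ p ∈ P, u ∉ p.2) (hQu : ∀ q ∈ Q, u ∈ q.1) : IsPosetMatching Δ (P ∪ Q) := by
  have hsep : ∀ p ∈ P, ∀ q ∈ Q, p.1 ≠ q.1 ∧ p.1 ≠ q.2 ∧ p.2 ≠ q.1 ∧ p.2 ≠ q.2 := by
    intro p hp q hq
    have hq2 : u ∈ q.2 := (hQ.1 q hq).2.2.1 (hQu q hq)
    have hp1 : u ∉ p.1 := fun h => hPu p hp ((hP.1 p hp).2.2.1 h)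
    refine ⟨?_, ?_, ?_, ?_⟩ <;> rintro h
    exacts [hp1 (h ▸ hQu q hq), hp1 (h ▸ hq2), hPu p hp (h ▸ hQu q hq), hPu p hp (h ▸ hq2)]
  refine ⟨fun p hp => hp.elim (hP.1 p) (hQ.1 p), ?_⟩
  rintro p (hp | hp) q (hq | hq) hpq
  · exact hP.2 p hp q hq hpq
  · exact hsep p hp q hq
  · obtain ⟨h1, h2, h3, h4⟩ := hsep q hq p hp
    exact ⟨h1.symm, h3.symm, h2.symm, h4.symm⟩
  · exact hQ.2 p hp q hq hpq

/-- Along a cycle, a pair containing `u` can only be preceded by another pair containing `u`,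
so a cycle in `P ∪ Q` lies entirely in `P` or entirely in `Q`. -/
theorem MatchingHasCycle.of_union (hPu : ∀ p ∈ P, u ∉ p.2) (hQu : ∀ q ∈ Q, u ∈ q.1)
    (hc : MatchingHasCycle (P ∪ Q)) : MatchingHasCycle P ∨ MatchingHasCycle Q := by
  obtain ⟨n, hn, f, hf, hinj, hstep, hwrap⟩ := hc
  have hmemQ : ∀ i < n, u ∈ (f i).2 → f i ∈ Q := by
    intro i hi hu
    exact (hf i hi).resolve_left fun hP => hPu _ hP hu
  have hdown : ∀ k < n, f k ∈ Q → ∀ i ≤ k, f i ∈ Q := by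
    intro k hk hfk i hi
    induction hi using Nat.decreasingInduction with
    | self => exact hfk
    | of_succ j hj ih => exact hmemQ j (by omega) ((hstep j (by omega)).subset (hQu _ ih))
  by_cases hall : ∀ i < n, f i ∈ P
  · exact .inl ⟨n, hn, f, hall, hinj, hstep, hwrap⟩
  · push Not at hall
    obtain ⟨k, hk, hkP⟩ := hall
    have hfirst : f 0 ∈ Q := hdown k hk ((hf k hk).resolve_left hkP) 0 k.zero_le
    have hlast : f (n - 1) ∈ Q := hmemQ _ (by omega) (hwrap.subset (hQu _ hfirst))
    exact .inr ⟨n, hn, f, fun i hi => hdown (n - 1) (by omega) hlast i (by omega),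
      hinj, hstep, hwrap⟩

theorem IsAcyclicMatching.union (hP : IsAcyclicMatching Δ P) (hQ : IsAcyclicMatching Δ Q)
    (hPu : ∀ p ∈ P, u ∉ p.2) (hQu : ∀ q ∈ Q, u ∈ q.1) : IsAcyclicMatching Δ (P ∪ Q) :=
  ⟨hP.1.union hQ.1 hPu hQu, fun hc => (hc.of_union hPu hQu).elim hP.2 hQ.2⟩

end Union

section Insert

variable {Δ : Set (Finset V)} {P : Set (Finset V × Finset V)} {v : V}

theorem isPosetMatching_of_forall_insert
    (hP : ∀ p ∈ P, p.1 ∈ Δ ∧ p.2 ∈ Δ ∧ v ∉ p.1 ∧ p.2 = insert v p.1) :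
    IsPosetMatching Δ P := by
  refine ⟨fun p hp => ?_, fun p hp q hq hpq => ?_⟩
  · obtain ⟨h1, h2, hv, h⟩ := hP p hp
    exact ⟨h1, h2, h ▸ Finset.subset_insert _ _, h ▸ Finset.card_insert_of_notMem hv⟩
  · obtain ⟨-, -, hvp, hp⟩ := hP p hp
    obtain ⟨-, -, hvq, hq⟩ := hP q hq
    have h11 : p.1 ≠ q.1 := fun h => hpq (Prod.ext h (by rw [hp, hq, h]))
    refine ⟨h11, fun h => hvp (h ▸ hq ▸ Finset.mem_insert_self v q.1),
      fun h => hvq (h ▸ hp ▸ Finset.mem_insert_self v p.1), fun h => h11 ?_⟩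
    rw [← Finset.erase_insert hvp, ← Finset.erase_insert hvq, ← hp, ← hq, h]

/-- Every step of a cycle of such pairs shrinks `σᵢ` (as `v ∉ σᵢ₊₁ ⊂ σᵢ ∪ {v}`), so going
around the cycle forces `σ₀ = σ₁`. -/
theorem not_matchingHasCycle_of_forall_insert (hP : ∀ p ∈ P, v ∉ p.1 ∧ p.2 = insert v p.1) :
    ¬ MatchingHasCycle P := by
  rintro ⟨n, hn, f, hf, hinj, hstep, hwrap⟩
  have hsucc : ∀ i, i + 1 < n → (f (i + 1)).1 ⊆ (f i).1 := fun i hi => by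
    have := (hstep i hi).subset
    rwa [(hP _ (hf i (by omega))).2, Finset.subset_insert_iff_of_notMem (hP _ (hf _ hi)).1]
      at this
  have hshrink : ∀ i j, i ≤ j → j < n → (f j).1 ⊆ (f i).1 := by
    intro i j hij hj
    induction j, hij using Nat.le_induction with
    | base => exact subset_rfl
    | succ j hij ih => exact (hsucc j hj).trans (ih (by omega))
  have hwrap' : (f 0).1 ⊆ (f (n - 1)).1 := by
    have := hwrap.subset
    rwa [(hP _ (hf _ (by omega))).2, Finset.subset_insert_iff_of_notMem (hP _ (hf 0 (by omega))).1]
      at this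
  have h01 : (f 0).1 = (f 1).1 :=
    (hwrap'.trans (hshrink 1 (n - 1) (by omega) (by omega))).antisymm
      (hshrink 0 1 (by omega) (by omega))
  have hf01 : f 0 = f 1 := Prod.ext h01 (by
    rw [(hP _ (hf 0 (by omega))).2, (hP _ (hf 1 (by omega))).2, h01])
  exact absurd (hinj (Set.mem_Iio.2 (by omega)) (Set.mem_Iio.2 (by omega)) hf01) (by omega)

theorem isAcyclicMatching_of_forall_insert
    (hP : ∀ p ∈ P, p.1 ∈ Δ ∧ p.2 ∈ Δ ∧ v ∉ p.1 ∧ p.2 = insert v p.1) :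
    IsAcyclicMatching Δ P :=
  ⟨isPosetMatching_of_forall_insert hP,
    not_matchingHasCycle_of_forall_insert fun p hp => (hP p hp).2.2⟩

end Insert

def foldMatching (G : SimpleGraph V) (u v : V) : Set (Finset V × Finset V) :=
  {p | p.1 ∈ IndFaces G ∧ u ∈ p.1 ∧ v ∉ p.1 ∧ p.2 = insert v p.1}

section Fold

variable {G : SimpleGraph V} {u v : V}

theorem isAcyclicMatching_foldMatching (h : G.neighborSet v ⊆ G.neighborSet u) :
    IsAcyclicMatching (IndFaces G) (foldMatching G u v) :=
  isAcyclicMatching_of_forall_insert fun _ ⟨hs, hu, hv, hp⟩ =>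
    ⟨hs, hp ▸ IsIndepSet.insert_of_neighborSet_subset hs hu h, hv, hp⟩

theorem criticalSet_foldMatching (huv : u ≠ v) :
    criticalSet (IndFaces G) (foldMatching G u v) = IndFaces G ∩ {s | u ∉ s} := by
  ext s
  refine ⟨fun ⟨hs, hcrit⟩ => ⟨hs, fun hu => ?_⟩, fun ⟨hs, hu⟩ => ⟨hs, ?_⟩⟩
  · by_cases hv : v ∈ s
    · refine (hcrit (s.erase v, s) ⟨IsIndepSet.mono (Finset.erase_subset v s) hs,
        Finset.mem_erase.2 ⟨huv, hu⟩, Finset.notMem_erase v s, ?_⟩).2 rfl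
      exact (Finset.insert_erase hv).symm
    · exact (hcrit (s, insert v s) ⟨hs, hu, hv, rfl⟩).1 rfl
  · rintro p ⟨-, hp1, -, hp2⟩
    exact ⟨fun e => hu (e ▸ hp1), fun e => hu (e ▸ hp2 ▸ Finset.mem_insert_of_mem hp1)⟩

end Fold

theorem Finset.range_map_subtype (p : V → Prop) :
    Set.range (Finset.map (Function.Embedding.subtype p)) = {s | ∀ x ∈ s, p x} := by
  ext s
  refine ⟨?_, fun h => ⟨s.subtype p, Finset.subtype_map_of_mem h⟩⟩
  rintro ⟨t, rfl⟩ _ hx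
  obtain ⟨x, -, rfl⟩ := Finset.mem_map.1 hx
  exact x.2

section Map

variable {W : Type*} (e : W ↪ V) {Δ' : Set (Finset W)} {Δ : Set (Finset V)}
  {P : Set (Finset W × Finset W)}

theorem map_mem_indFaces_iff (G : SimpleGraph V) (s : Finset W) :
    s.map e ∈ IndFaces G ↔ s ∈ IndFaces (G.comap e) := by
  simp only [IndFaces, IsIndepSet, Set.mem_ofPred_eq, Finset.mem_map, SimpleGraph.comap_adj,
    forall_exists_index, and_imp, forall_apply_eq_imp_iff₂]

theorem IsPosetMatching.image_map (hP : IsPosetMatching Δ' P) (hΔ : ∀ s ∈ Δ', s.map e ∈ Δ) :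
    IsPosetMatching Δ (Prod.map (Finset.map e) (Finset.map e) '' P) := by
  refine ⟨?_, ?_⟩
  · rintro _ ⟨p, hp, rfl⟩
    obtain ⟨h1, h2, hsub, hcard⟩ := hP.1 p hp
    exact ⟨hΔ _ h1, hΔ _ h2, Finset.map_subset_map.2 hsub, by simpa using hcard⟩
  · rintro _ ⟨p, hp, rfl⟩ _ ⟨q, hq, rfl⟩ hpq
    simpa using hP.2 p hp q hq (by rintro rfl; exact hpq rfl)

theorem MatchingHasCycle.of_image_map
    (hc : MatchingHasCycle (Prod.map (Finset.map e) (Finset.map e) '' P)) :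
    MatchingHasCycle P := by
  obtain ⟨n, hn, f, hf, hinj, hstep, hwrap⟩ := hc
  set F := Prod.map (Finset.map e) (Finset.map e)
  have hF : Function.Injective F := (Finset.map_injective e).prodMap (Finset.map_injective e)
  set g := Function.invFun F ∘ f
  have hg : ∀ i < n, g i ∈ P ∧ F (g i) = f i := by
    intro i hi
    obtain ⟨q, hq, hfq⟩ := hf i hi
    have hgi : g i = q :=
      (congrArg (Function.invFun F) hfq).symm.trans (Function.leftInverse_invFun hF q)
    rw [hgi]
    exact ⟨hq, hfq⟩
  have hssub : ∀ {i j}, i < n → j < n → (f i).1 ⊂ (f j).2 → (g i).1 ⊂ (g j).2 := by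
    intro i j hi hj h
    rwa [← (hg i hi).2, ← (hg j hj).2, Prod.map_fst, Prod.map_snd, Finset.map_ssubset_map] at h
  refine ⟨n, hn, g, fun i hi => (hg i hi).1, fun i hi j hj hij => hinj hi hj ?_,
    fun i hi => hssub (by omega) (by omega) (hstep i hi), hssub (by omega) (by omega) hwrap⟩
  rw [← (hg i hi).2, ← (hg j hj).2, hij]

theorem IsAcyclicMatching.image_map (hP : IsAcyclicMatching Δ' P) (hΔ : ∀ s ∈ Δ', s.map e ∈ Δ) :
    IsAcyclicMatching Δ (Prod.map (Finset.map e) (Finset.map e) '' P) :=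
  ⟨hP.1.image_map e hΔ, fun hc => hP.2 (hc.of_image_map e)⟩

theorem criticalSet_image_map_inter_range (hΔ : ∀ s, s.map e ∈ Δ ↔ s ∈ Δ') :
    criticalSet Δ (Prod.map (Finset.map e) (Finset.map e) '' P) ∩ Set.range (Finset.map e) =
      Finset.map e '' criticalSet Δ' P := by
  ext s
  constructor
  · rintro ⟨⟨hs, hcrit⟩, t, rfl⟩
    refine ⟨t, ⟨(hΔ t).1 hs, fun q hq => ?_⟩, rfl⟩
    simpa using hcrit _ ⟨q, hq, rfl⟩
  · rintro ⟨t, ⟨ht, hcrit⟩, rfl⟩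
    refine ⟨⟨(hΔ t).2 ht, ?_⟩, t, rfl⟩
    rintro _ ⟨q, hq, rfl⟩
    simpa using hcrit q hq

end Map

theorem statement_4_general {V : Type*} (G : SimpleGraph V) (u v : V)
    (hne : u ≠ v) (h : G.neighborSet v ⊆ G.neighborSet u) :
    cInvariant G ≤ cInvariant (G.induce {w | w ≠ u}) := by
  obtain ⟨P', hP', hcard⟩ :=
    exists_isAcyclicMatching_ncard_criticalSet_eq (G.induce {w | w ≠ u})
  set e := Function.Embedding.subtype (· ∈ ({w | w ≠ u} : Set V))
  have hrange : Set.range (Finset.map e) = {s | u ∉ s} := by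
    rw [Finset.range_map_subtype]
    ext s
    simp
  have hΔ : ∀ s, s.map e ∈ IndFaces G ↔ s ∈ IndFaces (G.induce {w | w ≠ u}) :=
    map_mem_indFaces_iff e G
  have hmapu : ∀ p ∈ Prod.map (Finset.map e) (Finset.map e) '' P', u ∉ p.2 := by
    rintro _ ⟨q, -, rfl⟩
    exact hrange.subset ⟨q.2, rfl⟩
  have hP := (hP'.image_map e fun s hs => (hΔ s).2 hs).union
    (isAcyclicMatching_foldMatching h) hmapu fun _ hp => hp.2.1
  calc cInvariant G ≤ _ := cInvariant_le_ncard_criticalSet hP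
    _ = (criticalSet (IndFaces (G.induce {w | w ≠ u})) P').ncard := by
      rw [criticalSet_union, criticalSet_foldMatching hne, ← Set.inter_assoc,
        Set.inter_eq_left.2 (criticalSet_subset _ _), ← hrange,
        criticalSet_image_map_inter_range e hΔ,
        Set.ncard_image_of_injective _ (Finset.map_injective e)]
    _ = _ := hcard

/-- The fold lemma: if `u ≠ v` and `N(v) ⊆ N(u)`, then `c(G) ≤ c(G \ u)`. -/
theorem statement_4 {V : Type*} [Finite V] (G : SimpleGraph V) (u v : V)
    (hne : u ≠ v) (h : G.neighborSet v ⊆ G.neighborSet u) :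
    cInvariant G ≤ cInvariant (G.induce {w | w ≠ u}) :=
  statement_4_general G u v hne h
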